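/- arXiv:1611.08326 — 2 statements merged into one kernel-verified Lean document; each statement's English description precedes it below -/
import Mathlib

section
/- In any undirected graph G, if a subset S 'contains all or none of each twin class' property fails for a set of k ≥ 2 pairwise non-adjacent mutually-twin vertices (identical neighborhoods outside the class), then S is not a (1, β)-community for any β < (|S|−1)/|S|. Equivalently: a (1, β)-community with β < 1 − 1/|S| either contains all k twins or none of them; and since the twins are pairwise non-adjacent, it must contain none (when k ≥ 2). -/
/-!
A community with `α = 1` is a clique, so it meets the independent twin class in at most one
vertex `u`. Any other twin `u'` then lies outside the community, yet it inherits from `u` all of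
`u`'s neighbours in the community, which lie outside the twin class; so `u'` sees `|S| - 1`
vertices of `S`, more than the `β |S|` an outsider may see.
-/

namespace SimpleGraph

variable {V : Type*} {G : SimpleGraph V} {u u' : V}

theorem IsClique.notMem_of_mem_isIndepSet {s t : Set V} (hs : G.IsClique s) (ht : G.IsIndepSet t)
    (hu : u ∈ t) (hus : u ∈ s) (hu' : u' ∈ t) (hne : u' ≠ u) : u' ∉ s :=
  fun hu's => ht hu' hu hne (hs hu's hus hne)

theorem IsClique.card_le_card_filter_adj_add_one [DecidableEq V] [DecidableRel G.Adj]
    {S : Finset V} {T : Set V} (hS : G.IsClique (S : Set V)) (hT : G.IsIndepSet T)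
    (hu : u ∈ T) (huS : u ∈ S) (htwin : ∀ w ∉ T, G.Adj u w → G.Adj u' w) :
    S.card ≤ (S.filter (G.Adj u')).card + 1 := by
  have hsub : S.erase u ⊆ S.filter (G.Adj u') := by
    intro w hw
    obtain ⟨hwu, hwS⟩ := Finset.mem_erase.mp hw
    have hadj : G.Adj u w := hS huS hwS hwu.symm
    have hwT : w ∉ T := fun hwT => hT hu hwT hwu.symm hadj
    exact Finset.mem_filter.mpr ⟨hwS, htwin w hwT hadj⟩
  calc S.card = (S.erase u).card + 1 := (Finset.card_erase_add_one huS).symm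
    _ ≤ (S.filter (G.Adj u')).card + 1 := Nat.add_le_add_right (Finset.card_le_card hsub) 1

end SimpleGraph

theorem one_sub_one_div_le_of_sub_one_le_mul {n β : ℝ} (hn : 0 < n) (h : n - 1 ≤ β * n) :
    1 - 1 / n ≤ β := by
  rwa [one_sub_div hn.ne', div_le_iff₀ hn]

theorem twin_class_excluded_from_community_general {V : Type} [DecidableEq V]
    (G : SimpleGraph V) [DecidableRel G.Adj] (T : Finset V) (hT : 2 ≤ T.card)
    (hindep : ∀ u ∈ T, ∀ u' ∈ T, ¬ G.Adj u u')
    (htwin : ∀ u ∈ T, ∀ u' ∈ T, ∀ w : V, w ∉ T → (G.Adj u w ↔ G.Adj u' w))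
    (S : Finset V) (β : ℝ) (hβ : β < 1 - 1 / (S.card : ℝ))
    (hstrong : ∀ v ∈ S, ∀ w ∈ S, v ≠ w → G.Adj v w)
    (hweak : ∀ u ∉ S, ((S.filter (fun w => G.Adj u w)).card : ℝ) ≤ β * S.card) :
    ((∀ u ∈ T, u ∈ S) ∨ (∀ u ∈ T, u ∉ S)) ∧ (∀ u ∈ T, u ∉ S) := by
  have hS : G.IsClique (S : Set V) := fun v hv w hw hne => hstrong v hv w hw hne
  have hT' : G.IsIndepSet (T : Set V) := fun v hv w hw _ => hindep v hv w hw
  have hnone : ∀ u ∈ T, u ∉ S := by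
    intro u hu huS
    obtain ⟨u', hu', hne⟩ := T.exists_mem_ne hT u
    have hu'S : u' ∉ S := hS.notMem_of_mem_isIndepSet hT' hu huS hu' hne
    have hcard : (S.card : ℝ) ≤ (S.filter (G.Adj u')).card + 1 := by
      exact_mod_cast hS.card_le_card_filter_adj_add_one hT' hu huS
        fun w hw => (htwin u hu u' hu' w hw).mp
    have hSpos : (0 : ℝ) < S.card := by exact_mod_cast Finset.card_pos.mpr ⟨u, huS⟩
    have hβ' : 1 - 1 / (S.card : ℝ) ≤ β :=
      one_sub_one_div_le_of_sub_one_le_mul hSpos (by linarith [hweak u' hu'S])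
    linarith
  exact ⟨Or.inr hnone, hnone⟩

/-- Let `T` be a class of `k ≥ 2` pairwise non-adjacent twin vertices
(identical neighborhoods outside `T`).  Any `(1, β)`-community `S` with
`β < 1 − 1/|S|` contains all of the twins or none of them — and, since the twins are
pairwise non-adjacent, it must in fact contain none of them. -/
theorem twin_class_excluded_from_community {V : Type} [Fintype V] [DecidableEq V]
    (G : SimpleGraph V) [DecidableRel G.Adj] (T : Finset V) (hT : 2 ≤ T.card)
    (hindep : ∀ u ∈ T, ∀ u' ∈ T, ¬ G.Adj u u')
    (htwin : ∀ u ∈ T, ∀ u' ∈ T, ∀ w : V, w ∉ T → (G.Adj u w ↔ G.Adj u' w))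
    (S : Finset V) (β : ℝ) (hβ : β < 1 - 1 / (S.card : ℝ))
    (hstrong : ∀ v ∈ S, ∀ w ∈ S, v ≠ w → G.Adj v w)
    (hweak : ∀ u ∉ S, ((S.filter (fun w => G.Adj u w)).card : ℝ) ≤ β * S.card) :
    ((∀ u ∈ T, u ∈ S) ∨ (∀ u ∈ T, u ∉ S)) ∧ (∀ u ∈ T, u ∉ S) :=
  twin_class_excluded_from_community_general G T hT hindep htwin S β hβ hstrong hweak
end

section
/- Consider the communities graph from the counting reduction: vertices are tuples (g, p₁, p₂, i) with g ∈ G (a finite field), p₁, p₂ degree-(|F|−1) polynomials over G with p₁(g) = p₂(g), and i ∈ [1/ε]; two vertices are adjacent iff their induced partial assignments agree on the intersections of their lines and violate no Label Cover constraint; additionally, for each g and i there are two identical non-adjacent auxiliary vertices u_{g,i} adjacent to every proper vertex (g', p₁, p₂, i) with g' ≠ g. Then no (1, ε)-community C in this graph contains any auxiliary vertex. -/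
open scoped Classical

/-- The partial assignment (on the row `G × {g}` and column `{g} × G`) induced by the data
`(g, p₁, p₂)`: the point `(h, g)` gets the value `p₁(h)` and the point `(g, h)` gets the
value `p₂(h)`. -/
def lineAssign {𝔽 : Type} [CommSemiring 𝔽] [DecidableEq 𝔽]
    (g : 𝔽) (p₁ p₂ : Polynomial 𝔽) (z : 𝔽 × 𝔽) : Option 𝔽 :=
  if z.2 = g then some (Polynomial.eval z.1 p₁)
  else if z.1 = g then some (Polynomial.eval z.2 p₂)
  else none

/-- A proper vertex of the communities graph: a line index `g`, two polynomials of degree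
at most `d` assigning values to the row and column of `g` and agreeing at `(g, g)`,
and a copy index `i ∈ [k]` (with `k = 1/ε`). -/
structure ProperData (𝔽 : Type) [CommSemiring 𝔽] (d k : ℕ) where
  g : 𝔽
  p₁ : Polynomial 𝔽
  p₂ : Polynomial 𝔽
  i : Fin k
  hdeg₁ : p₁.natDegree ≤ d
  hdeg₂ : p₂.natDegree ≤ d
  hmeet : Polynomial.eval g p₁ = Polynomial.eval g p₂

/-- Vertices: proper vertices, plus auxiliary vertices `u_{g,i}` (two identical copies
each, indexed by a `Bool`). -/
abbrev Vtx (𝔽 : Type) [CommSemiring 𝔽] (d k : ℕ) : Type :=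
  ProperData 𝔽 d k ⊕ (𝔽 × Fin k × Bool)

/-- The partial assignment induced by a proper vertex. -/
def assignOf {𝔽 : Type} [CommSemiring 𝔽] [DecidableEq 𝔽] {d k : ℕ}
    (v : ProperData 𝔽 d k) : 𝔽 × 𝔽 → Option 𝔽 :=
  lineAssign v.g v.p₁ v.p₂

/-- Two proper vertices agree on the intersection of their lines. -/
def Agree {𝔽 : Type} [CommSemiring 𝔽] [DecidableEq 𝔽] {d k : ℕ}
    (v w : ProperData 𝔽 d k) : Prop :=
  ∀ (z : 𝔽 × 𝔽) (a b : 𝔽), assignOf v z = some a → assignOf w z = some b → a = b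

/-- Adjacency in the communities graph.  Two proper vertices are adjacent iff they agree
on the intersection of their lines and their induced assignments violate no Label Cover
constraint (the latter abstracted by the relation `ok`).  The auxiliary vertex `u_{g,i}`
is adjacent exactly to the proper vertices `v_{g',p₁,p₂,i}` with `g' ≠ g`; the copies of
auxiliary vertices are pairwise non-adjacent. -/
def Adj {𝔽 : Type} [CommSemiring 𝔽] [DecidableEq 𝔽] {d k : ℕ}
    (ok : (𝔽 × 𝔽 → Option 𝔽) → (𝔽 × 𝔽 → Option 𝔽) → Prop) :
    Vtx 𝔽 d k → Vtx 𝔽 d k → Prop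
  | Sum.inl v, Sum.inl w => v ≠ w ∧ Agree v w ∧ ok (assignOf v) (assignOf w)
  | Sum.inl v, Sum.inr u => v.g ≠ u.1 ∧ v.i = u.2.1
  | Sum.inr u, Sum.inl v => v.g ≠ u.1 ∧ v.i = u.2.1
  | Sum.inr _, Sum.inr _ => False

/-- A `(1, β)`-community: a finite nonempty set of vertices, every member adjacent to
every other member, and every non-member adjacent to at most a `β`-fraction of the
members. -/
def IsCommunity {𝔽 : Type} [CommSemiring 𝔽] [DecidableEq 𝔽] {d k : ℕ}
    (ok : (𝔽 × 𝔽 → Option 𝔽) → (𝔽 × 𝔽 → Option 𝔽) → Prop)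
    (β : ℝ) (C : Set (Vtx 𝔽 d k)) : Prop :=
  C.Finite ∧ C.Nonempty ∧
  (∀ v ∈ C, ∀ w ∈ C, v ≠ w → Adj ok v w) ∧
  (∀ u ∉ C, ({w ∈ C | Adj ok u w}.ncard : ℝ) ≤ β * C.ncard)

/-!
The two copies of an auxiliary vertex `u` are non-adjacent twins, so the copy `u'` of a member
`u` of a community lies outside it yet is adjacent to every other member. Hence
`|C| - 1 ≤ ε |C|`, which for `ε ≤ 1/3` forces `C = {u}`; but then any proper vertex on another
line is adjacent to all of `C`, contradicting `ε < 1`.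
-/

def twin {𝔽 : Type} {k : ℕ} (u : 𝔽 × Fin k × Bool) : 𝔽 × Fin k × Bool := (u.1, u.2.1, !u.2.2)

theorem twin_ne {𝔽 : Type} {k : ℕ} (u : 𝔽 × Fin k × Bool) : twin u ≠ u := by
  simp [twin, Prod.ext_iff]

section Community

variable {𝔽 : Type} [CommSemiring 𝔽] [DecidableEq 𝔽] {d k : ℕ}
  {ok : (𝔽 × 𝔽 → Option 𝔽) → (𝔽 × 𝔽 → Option 𝔽) → Prop} {β : ℝ} {C : Set (Vtx 𝔽 d k)}

theorem adj_inr_twin_iff (u : 𝔽 × Fin k × Bool) (w : Vtx 𝔽 d k) :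
    Adj ok (Sum.inr (twin u)) w ↔ Adj ok (Sum.inr u) w := by
  cases w <;> rfl

theorem IsCommunity.inr_twin_not_mem (hC : IsCommunity ok β C) {u : 𝔽 × Fin k × Bool}
    (hu : Sum.inr u ∈ C) : Sum.inr (twin u) ∉ C := fun h =>
  hC.2.2.1 _ hu _ h (by simpa using (twin_ne u).symm)

theorem exists_adj_inl_inr [Nontrivial 𝔽] (u : 𝔽 × Fin k × Bool) :
    ∃ v : ProperData 𝔽 d k, Adj ok (Sum.inl v) (Sum.inr u) := by
  obtain ⟨g, hg⟩ := exists_ne u.1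
  exact ⟨⟨g, 0, 0, u.2.1, by simp, by simp, rfl⟩, hg, rfl⟩

theorem IsCommunity.eq_singleton_of_dominated (hC : IsCommunity ok β C) (hβ : β < 1 / 2)
    {x y : Vtx 𝔽 d k} (hx : x ∈ C) (hy : y ∉ C) (hxy : ∀ w, Adj ok x w → Adj ok y w) :
    C = {x} := by
  obtain ⟨hfin, -, hclique, hsparse⟩ := hC
  have hsub : C \ {x} ⊆ {w ∈ C | Adj ok y w} := fun w ⟨hw, hwx⟩ =>
    ⟨hw, hxy w (hclique x hx w hw (Ne.symm hwx))⟩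
  have hle : ((C.ncard - 1 : ℕ) : ℝ) ≤ β * C.ncard := by
    rw [← Set.ncard_sdiff_singleton_of_mem hx]
    exact le_trans (by exact_mod_cast Set.ncard_le_ncard hsub (hfin.subset fun w hw => hw.1))
      (hsparse y hy)
  have hpos : 0 < C.ncard := (Set.ncard_pos hfin).mpr ⟨x, hx⟩
  have hcard : C.ncard ≤ 1 := by
    rw [Nat.cast_sub hpos, Nat.cast_one] at hle
    have : (C.ncard : ℝ) < 2 := by nlinarith
    exact Nat.lt_succ_iff.mp (by exact_mod_cast this)
  exact Set.eq_singleton_iff_unique_mem.mpr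
    ⟨hx, fun w hw => (Set.ncard_le_one_iff hfin).mp hcard hw hx⟩

theorem IsCommunity.ne_singleton_of_adj (hC : IsCommunity ok β C) (hβ : β < 1)
    {x y : Vtx 𝔽 d k} (hyx : y ≠ x) (hadj : Adj ok y x) : C ≠ {x} := by
  rintro rfl
  have hneighbors : {w ∈ ({x} : Set (Vtx 𝔽 d k)) | Adj ok y w} = {x} := by
    ext w
    simp only [Set.mem_ofPred_eq, Set.mem_singleton_iff]
    exact ⟨And.left, fun hw => ⟨hw, hw ▸ hadj⟩⟩
  have := hC.2.2.2 y hyx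
  rw [hneighbors, Set.ncard_singleton, Nat.cast_one, mul_one] at this
  linarith

end Community

theorem no_auxiliary_vertices_in_community_general {𝔽 : Type} [Field 𝔽] [Fintype 𝔽]
    [DecidableEq 𝔽] (F : Finset 𝔽) (k : ℕ) (hk : 3 ≤ k)
    (hcard : 2 ≤ Fintype.card 𝔽) (ε : ℝ) (hε : ε = 1 / (k : ℝ))
    (ok : (𝔽 × 𝔽 → Option 𝔽) → (𝔽 × 𝔽 → Option 𝔽) → Prop)
    (C : Set (Vtx 𝔽 (F.card - 1) k)) (hC : IsCommunity ok ε C) :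
    ∀ u : 𝔽 × Fin k × Bool, Sum.inr u ∉ C := by
  intro u hu
  have : Nontrivial 𝔽 := Fintype.one_lt_card_iff_nontrivial.mp hcard
  have hε3 : ε ≤ 1 / 3 := hε ▸ one_div_le_one_div_of_le (by norm_num) (by exact_mod_cast hk)
  have hCu : C = {Sum.inr u} := hC.eq_singleton_of_dominated (by linarith) hu
    (hC.inr_twin_not_mem hu) fun w => (adj_inr_twin_iff u w).mpr
  obtain ⟨v, hv⟩ := exists_adj_inl_inr (ok := ok) (d := F.card - 1) u
  exact hC.ne_singleton_of_adj (by linarith) Sum.inl_ne_inr hv hCu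

/-- In the communities graph of the counting reduction, no
`(1, ε)`-community contains any auxiliary vertex. -/
theorem no_auxiliary_vertices_in_community {𝔽 : Type} [Field 𝔽] [Fintype 𝔽]
    [DecidableEq 𝔽] (F : Finset 𝔽) (k : ℕ) (hk : 3 ≤ k)
    (hcard : 2 ≤ Fintype.card 𝔽) (ε : ℝ) (hε : ε = 1 / (k : ℝ))
    (ok : (𝔽 × 𝔽 → Option 𝔽) → (𝔽 × 𝔽 → Option 𝔽) → Prop)
    (hsym : ∀ f g, ok f g ↔ ok g f)
    (C : Set (Vtx 𝔽 (F.card - 1) k)) (hC : IsCommunity ok ε C) :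
    ∀ u : 𝔽 × Fin k × Bool, Sum.inr u ∉ C :=
  no_auxiliary_vertices_in_community_general F k hk hcard ε hε ok C hC
end
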